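/- Let 𝒜 be an S-ring over a finite abelian group G which is the S-wreath product 𝒜_U ≀_S 𝒜_{G/L} with respect to an 𝒜-section S = U/L. Suppose that 𝒜_U and 𝒜_{G/L} are separable with respect to 𝒦_A and that Aut(𝒜_U)^S = Aut(𝒜_S). Then 𝒜 is separable with respect to 𝒦_A. In particular, the wreath product of two separable S-rings over abelian groups is separable with respect to 𝒦_A. -/

import Mathlib

/-!
Let `φ` be an algebraic isomorphism from `𝒜` onto an S-ring `ℬ` over an abelian group `H`. The
unions `U'`, `L'` of the images of the basic sets inside `U`, `L` are `ℬ`-subgroups, and `φ`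
restricts to algebraic isomorphisms `𝒜_U → ℬ_{U'}` and `𝒜_{G/L} → ℬ_{H/L'}`, which by
separability are induced by bijections `fU : U → U'` and `fbar : G/L → H/L'`.

For `c ∈ G`, the map `t ↦ fbar (t c) (fbar c)⁻¹` of `S = U/L`, read back through `fU`, is an
automorphism of `𝒜_S`; by `Aut(𝒜_U)^S = Aut(𝒜_S)` it lifts to some `p ∈ Aut(𝒜_U)`, and
`ψ_c = fU ∘ p` induces `φ` on `𝒜_U` while agreeing with `fbar (· c) (fbar c)⁻¹` modulo `L'`.
Gluing, `x ↦ ψ_c (x c⁻¹) · fbar(c)` with `c` the representative of `x U` is the required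
bijection: differences in basic sets inside `U` stay in one `U`-coset and are handled by `ψ_c`,
while the basic sets outside `U` are unions of `L`-cosets (and so are their images, of
`L'`-cosets) and are handled by `fbar`.
-/

open scoped Pointwise

/-- The number of representations of `z` as `x * y` with `x ∈ X`, `y ∈ Y`
(used for the structure constants of an S-ring). -/
def structConst {G : Type*} [Group G] [DecidableEq G] (X Y : Finset G) (z : G) : ℕ :=
  ((X ×ˢ Y).filter (fun q => q.1 * q.2 = z)).card

/-- An S-ring (Schur ring) over a finite group `G`, given by its partition into basic sets:
the partition contains `{1}`, is closed under inversion, and the products of the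
characteristic sums of two blocks are integral linear combinations of characteristic sums,
i.e. the number of representations `z = x * y` (`x ∈ X`, `y ∈ Y`) is constant for `z`
ranging over a block `Z`. -/
structure SRing (G : Type*) [Group G] [Fintype G] [DecidableEq G] where
  basicSets : Finset (Finset G)
  nonempty_mem : ∀ X ∈ basicSets, X.Nonempty
  exists_mem : ∀ g : G, ∃ X ∈ basicSets, g ∈ X
  disj : ∀ X ∈ basicSets, ∀ Y ∈ basicSets, X ≠ Y → Disjoint X Y
  one_mem : ({1} : Finset G) ∈ basicSets
  inv_mem : ∀ X ∈ basicSets, X.image (fun x => x⁻¹) ∈ basicSets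
  structConst_eq : ∀ X ∈ basicSets, ∀ Y ∈ basicSets, ∀ Z ∈ basicSets,
    ∀ z ∈ Z, ∀ z' ∈ Z, structConst X Y z = structConst X Y z'

namespace SRing

variable {G G' : Type*} [Group G] [Fintype G] [DecidableEq G]
  [Group G'] [Fintype G'] [DecidableEq G']

/-- An algebraic isomorphism between S-rings: a bijection between the sets of basic sets
preserving the structure constants. -/
def IsAlgIso (A : SRing G) (B : SRing G') (φ : Finset G → Finset G') : Prop :=
  Set.BijOn φ (A.basicSets : Set (Finset G)) (B.basicSets : Set (Finset G')) ∧
  ∀ X ∈ A.basicSets, ∀ Y ∈ A.basicSets, ∀ Z ∈ A.basicSets,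
    ∀ z ∈ Z, ∀ z' ∈ φ Z, structConst X Y z = structConst (φ X) (φ Y) z'

/-- `φ` is induced by the bijection `f : G → G'` if `R(X)^f = R(X^φ)` for every basic set `X`,
where `R(X) = {(g, xg) : x ∈ X, g ∈ G}`; equivalently (for bijective `f`),
`h * g⁻¹ ∈ X ↔ f h * (f g)⁻¹ ∈ φ X` for all `g h`. -/
def Induces (A : SRing G) (B : SRing G') (φ : Finset G → Finset G') (f : G → G') : Prop :=
  Function.Bijective f ∧
  ∀ X ∈ A.basicSets, ∀ g h : G, h * g⁻¹ ∈ X ↔ f h * (f g)⁻¹ ∈ φ X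

/-- Separability with respect to the class of all finite abelian groups. -/
def SeparableA (A : SRing G) : Prop :=
  ∀ (H : Type) [CommGroup H] [Fintype H] [DecidableEq H],
    ∀ (B : SRing H) (φ : Finset G → Finset H),
      A.IsAlgIso B φ → ∃ f : G → H, A.Induces B φ f

/-- `X` is an `A`-set: a union of basic sets of `A`. -/
def IsASet (A : SRing G) (X : Finset G) : Prop :=
  ∀ Y ∈ A.basicSets, (Y ∩ X).Nonempty → Y ⊆ X

end SRing
namespace SRing

variable {G : Type*} [Group G] [Fintype G] [DecidableEq G]

/-- The automorphism group of an S-ring: all permutations `f` of `G` with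
`R(X)^f = R(X)` for every basic set `X`. -/
def autPerm (A : SRing G) : Subgroup (Equiv.Perm G) where
  carrier := {f | ∀ X ∈ A.basicSets, ∀ g h : G, h * g⁻¹ ∈ X ↔ f h * (f g)⁻¹ ∈ X}
  one_mem' := by intro X hX g h; simp
  mul_mem' := by
    intro a b ha hb X hX g h
    rw [Equiv.Perm.mul_apply, Equiv.Perm.mul_apply]
    exact (hb X hX g h).trans (ha X hX (b g) (b h))
  inv_mem' := by
    intro f hf X hX g h
    have h2 := hf X hX (f⁻¹ g) (f⁻¹ h)
    simp only [Equiv.Perm.inv_def, Equiv.apply_symm_apply] at h2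
    exact h2.symm

end SRing

/-- The group of right translations `x ↦ x * h` inside `Sym(G)`. -/
def rightTranslations (G : Type*) [Group G] : Subgroup (Equiv.Perm G) where
  carrier := {f | ∃ h : G, ∀ x : G, f x = x * h}
  one_mem' := ⟨1, by simp⟩
  mul_mem' := by
    rintro a b ⟨h1, ha⟩ ⟨h2, hb⟩
    exact ⟨h2 * h1, fun x => by rw [Equiv.Perm.mul_apply, hb, ha, mul_assoc]⟩
  inv_mem' := by
    rintro f ⟨h, hf⟩
    refine ⟨h⁻¹, fun x => ?_⟩
    have : f (x * h⁻¹) = x := by rw [hf, inv_mul_cancel_right]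
    calc f⁻¹ x = f⁻¹ (f (x * h⁻¹)) := by rw [this]
    _ = x * h⁻¹ := by simp

/-- For `Δ` a set of permutations of `U` and `N ⊴ U`, the induced set `Δ^S` of permutations of
the section `S = U/N`, consisting of the maps induced by those elements of `Δ` that permute
the `N`-cosets. -/
def sectionAut {U : Type*} [Group U] (N : Subgroup U) [N.Normal]
    (Δ : Set (Equiv.Perm U)) : Set (Equiv.Perm (U ⧸ N)) :=
  {σ | ∃ f ∈ Δ,
    (∀ u v : U, (QuotientGroup.mk u : U ⧸ N) = QuotientGroup.mk v →
      (QuotientGroup.mk (f u) : U ⧸ N) = QuotientGroup.mk (f v)) ∧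
    ∀ u : U, σ (QuotientGroup.mk u) = QuotientGroup.mk (f u)}

open Finset

namespace SRing

section Basic

variable {K : Type*} [Group K] [DecidableEq K]

theorem structConst_pos {X Y : Finset K} {z : K} :
    0 < structConst X Y z ↔ ∃ x ∈ X, ∃ y ∈ Y, x * y = z := by
  simp [structConst, Finset.card_pos, Finset.filter_nonempty_iff, and_assoc]

theorem structConst_image_inv_one (X : Finset K) : structConst X (X.image (·⁻¹)) 1 = #X := by
  unfold structConst
  refine (card_nbij (fun a => (a, a⁻¹)) (fun a ha => ?_) (fun a _ b _ h => (Prod.mk.inj h).1)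
    (fun p hp => ?_)).symm
  · rw [mem_coe, mem_filter, mem_product]
    exact ⟨⟨ha, mem_image_of_mem _ ha⟩, mul_inv_cancel a⟩
  · simp only [coe_filter, mem_product, Set.mem_ofPred_eq] at hp
    refine ⟨p.1, hp.1.1, Prod.ext rfl ?_⟩
    exact (eq_inv_of_mul_eq_one_right hp.2).symm

variable [Fintype K]

theorem ext_basicSets {C D : SRing K} (h : C.basicSets = D.basicSets) : C = D := by
  cases C; cases D; cases h; rfl

theorem eq_of_mem_of_mem (C : SRing K) {X Y : Finset K} (hX : X ∈ C.basicSets)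
    (hY : Y ∈ C.basicSets) {g : K} (hgX : g ∈ X) (hgY : g ∈ Y) : X = Y := by
  by_contra hne
  exact (C.disj X hX Y hY hne).forall_ne_finset hgX hgY rfl

theorem biUnion_basicSets (C : SRing K) : C.basicSets.biUnion (fun X => X) = univ :=
  eq_univ_of_forall fun g => by simpa using C.exists_mem g

theorem sum_card_basicSets (C : SRing K) : ∑ X ∈ C.basicSets, #X = Fintype.card K := by
  rw [← card_biUnion C.disj, biUnion_basicSets, card_univ]

theorem structConst_eq_sum_of_isASet (C : SRing K) {M : Finset K} (hM : C.IsASet M)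
    (X : Finset K) (z : K) :
    structConst X M z = ∑ Y ∈ C.basicSets.filter (· ⊆ M), structConst X Y z := by
  have hM' : (C.basicSets.filter (· ⊆ M)).biUnion id = M := by
    ext m
    simp only [mem_biUnion, mem_filter, id]
    refine ⟨fun ⟨Y, ⟨_, hYM⟩, hm⟩ => hYM hm, fun hm => ?_⟩
    obtain ⟨W, hW, hmW⟩ := C.exists_mem m
    exact ⟨W, ⟨hW, hM W hW ⟨m, mem_inter.2 ⟨hmW, hm⟩⟩⟩, hmW⟩
  have hprod : X ×ˢ M = (C.basicSets.filter (· ⊆ M)).biUnion (X ×ˢ ·) := by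
    conv_lhs => rw [← hM']
    ext
    simp only [mem_product, mem_biUnion, mem_filter, id]
    tauto
  rw [structConst, hprod, filter_biUnion, card_biUnion]
  · rfl
  · intro Y hY Z hZ hne
    refine disjoint_filter_filter (disjoint_product.2 (Or.inr ?_))
    exact C.disj Y (mem_filter.1 hY).1 Z (mem_filter.1 hZ).1 hne

/-- Injectivity of `f` comes from the basic set `{1}`. -/
theorem exists_mem_autPerm (C : SRing K) (f : K → K)
    (hf : ∀ X ∈ C.basicSets, ∀ g h : K, h * g⁻¹ ∈ X ↔ f h * (f g)⁻¹ ∈ X) :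
    ∃ σ ∈ C.autPerm, ⇑σ = f := by
  have hinj : Function.Injective f := fun g h hgh => by
    simpa [mul_inv_eq_one, hgh, eq_comm] using hf {1} C.one_mem h g
  exact ⟨Equiv.ofBijective f (Finite.injective_iff_bijective.1 hinj), hf, rfl⟩

end Basic

section AlgIso

variable {K K' : Type*} [Group K] [Fintype K] [DecidableEq K]
  [Group K'] [Fintype K'] [DecidableEq K']
variable {C : SRing K} {C' : SRing K'} {φ : Finset K → Finset K'}

theorem IsAlgIso.refl (C : SRing K) : C.IsAlgIso C id :=
  ⟨Set.bijOn_id _, C.structConst_eq⟩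

theorem IsAlgIso.mem (hφ : C.IsAlgIso C' φ) {X : Finset K} (hX : X ∈ C.basicSets) :
    φ X ∈ C'.basicSets := hφ.1.mapsTo hX

theorem IsAlgIso.inj (hφ : C.IsAlgIso C' φ) {X Y : Finset K} (hX : X ∈ C.basicSets)
    (hY : Y ∈ C.basicSets) (h : φ X = φ Y) : X = Y := hφ.1.injOn hX hY h

theorem IsAlgIso.surj (hφ : C.IsAlgIso C' φ) {Y : Finset K'} (hY : Y ∈ C'.basicSets) :
    ∃ X ∈ C.basicSets, φ X = Y := hφ.1.surjOn hY

theorem IsAlgIso.nonempty (hφ : C.IsAlgIso C' φ) {X : Finset K} (hX : X ∈ C.basicSets) :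
    (φ X).Nonempty := C'.nonempty_mem _ (hφ.mem hX)

theorem IsAlgIso.mem_iff_of_mem (hφ : C.IsAlgIso C' φ) {W X : Finset K}
    (hW : W ∈ C.basicSets) (hX : X ∈ C.basicSets) {z : K} {z' : K'} (hz : z ∈ W)
    (hz' : z' ∈ φ W) : z ∈ X ↔ z' ∈ φ X := by
  constructor
  · intro hzX
    rwa [← C.eq_of_mem_of_mem hW hX hz hzX]
  · intro hzX
    rwa [← hφ.inj hW hX (C'.eq_of_mem_of_mem (hφ.mem hW) (hφ.mem hX) hz' hzX)]

theorem IsAlgIso.exists_mul_mem (hφ : C.IsAlgIso C' φ) {X Y : Finset K}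
    (hX : X ∈ C.basicSets) (hY : Y ∈ C.basicSets) {x' y' : K'} (hx' : x' ∈ φ X)
    (hy' : y' ∈ φ Y) :
    ∃ Z ∈ C.basicSets, x' * y' ∈ φ Z ∧ ∃ x ∈ X, ∃ y ∈ Y, x * y ∈ Z := by
  obtain ⟨Z', hZ', hxy'⟩ := C'.exists_mem (x' * y')
  obtain ⟨Z, hZ, rfl⟩ := hφ.surj hZ'
  obtain ⟨z, hz⟩ := C.nonempty_mem Z hZ
  have hpos : 0 < structConst (φ X) (φ Y) (x' * y') :=
    structConst_pos.2 ⟨x', hx', y', hy', rfl⟩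
  rw [← hφ.2 X hX Y hY Z hZ z hz _ hxy', structConst_pos] at hpos
  obtain ⟨x, hx, y, hy, rfl⟩ := hpos
  exact ⟨Z, hZ, hxy', x, hx, y, hy, hz⟩

theorem IsAlgIso.map_one (hφ : C.IsAlgIso C' φ) : φ {1} = {1} := by
  obtain ⟨Z, hZ, hφZ⟩ := hφ.surj C'.one_mem
  obtain ⟨w, hw⟩ := hφ.nonempty C.one_mem
  have hpos : 0 < structConst (φ Z) (φ {1}) w :=
    structConst_pos.2 ⟨1, by simp [hφZ], w, hw, one_mul w⟩
  rw [← hφ.2 Z hZ {1} C.one_mem {1} C.one_mem 1 (mem_singleton_self 1) w hw,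
    structConst_pos] at hpos
  obtain ⟨x, hx, y, hy, hxy⟩ := hpos
  obtain rfl : x = 1 := by simpa [mem_singleton.1 hy] using hxy
  rw [C.eq_of_mem_of_mem C.one_mem hZ (mem_singleton_self 1) hx, hφZ]

theorem IsAlgIso.map_inv (hφ : C.IsAlgIso C' φ) {X : Finset K} (hX : X ∈ C.basicSets) :
    φ (X.image (·⁻¹)) = (φ X).image (·⁻¹) := by
  obtain ⟨x, hx⟩ := C.nonempty_mem X hX
  have hpos : 0 < structConst X (X.image (·⁻¹)) 1 :=
    structConst_pos.2 ⟨x, hx, x⁻¹, mem_image_of_mem _ hx, mul_inv_cancel x⟩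
  rw [hφ.2 X hX _ (C.inv_mem X hX) {1} C.one_mem 1 (mem_singleton_self 1) 1
    (by simp [hφ.map_one]), structConst_pos] at hpos
  obtain ⟨a, ha, b, hb, hab⟩ := hpos
  rw [mul_eq_one_iff_eq_inv'] at hab
  refine C'.eq_of_mem_of_mem (hφ.mem (C.inv_mem X hX)) (C'.inv_mem _ (hφ.mem hX)) hb ?_
  exact mem_image.2 ⟨a, ha, hab ▸ rfl⟩

theorem IsAlgIso.card_map (hφ : C.IsAlgIso C' φ) {X : Finset K} (hX : X ∈ C.basicSets) :
    #(φ X) = #X := by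
  rw [← structConst_image_inv_one (φ X), ← hφ.map_inv hX,
    ← hφ.2 X hX _ (C.inv_mem X hX) {1} C.one_mem 1 (mem_singleton_self 1) 1
      (by simp [hφ.map_one]), structConst_image_inv_one]

theorem IsAlgIso.card_eq (hφ : C.IsAlgIso C' φ) : Fintype.card K = Fintype.card K' := by
  rw [← sum_card_basicSets C, ← sum_card_basicSets C']
  exact sum_bij (fun X _ => φ X) (fun X hX => hφ.mem hX) (fun X hX Y hY h => hφ.inj hX hY h)
    (fun Y hY => let ⟨X, hX, h⟩ := hφ.surj hY; ⟨X, hX, h⟩)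
    (fun X hX => (hφ.card_map hX).symm)

/-- The converse implications and injectivity hold because the sets `φ X` partition `K'`, and
surjectivity because `|K| = |K'|`. -/
theorem IsAlgIso.induces_of_forall_mem (hφ : C.IsAlgIso C' φ) (f : K → K')
    (hf : ∀ X ∈ C.basicSets, ∀ g h : K, h * g⁻¹ ∈ X → f h * (f g)⁻¹ ∈ φ X) :
    C.Induces C' φ f := by
  have hiff : ∀ X ∈ C.basicSets, ∀ g h : K, h * g⁻¹ ∈ X ↔ f h * (f g)⁻¹ ∈ φ X := by
    intro X hX g h
    obtain ⟨W, hW, hhg⟩ := C.exists_mem (h * g⁻¹)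
    exact hφ.mem_iff_of_mem hW hX hhg (hf W hW g h hhg)
  have hinj : Function.Injective f := fun g h hgh => by
    simpa [hφ.map_one, hgh, mul_inv_eq_one, eq_comm] using hiff {1} C.one_mem h g
  exact ⟨(Fintype.bijective_iff_injective_and_card f).2 ⟨hinj, hφ.card_eq⟩, hiff⟩

end AlgIso

section ImageSet

variable {K K' : Type*} [Group K] [Fintype K] [DecidableEq K] [DecidableEq K']
variable {C : SRing K} {φ : Finset K → Finset K'}

variable (C φ) in
def imageSet (M : Finset K) : Finset K' := (C.basicSets.filter (· ⊆ M)).biUnion φ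

theorem mem_imageSet {M : Finset K} {y : K'} :
    y ∈ imageSet C φ M ↔ ∃ X ∈ C.basicSets, X ⊆ M ∧ y ∈ φ X := by
  simp [imageSet, and_assoc]

variable [Group K'] [Fintype K'] {C' : SRing K'}

theorem IsAlgIso.isASet_imageSet (hφ : C.IsAlgIso C' φ) (M : Finset K) :
    C'.IsASet (imageSet C φ M) := by
  rintro Y hY ⟨y, hy⟩
  obtain ⟨X, hX, hXM, hyX⟩ := mem_imageSet.1 (mem_inter.1 hy).2
  obtain rfl := C'.eq_of_mem_of_mem hY (hφ.mem hX) (mem_inter.1 hy).1 hyX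
  exact fun a ha => mem_imageSet.2 ⟨X, hX, hXM, ha⟩

theorem IsAlgIso.map_subset_imageSet_iff (hφ : C.IsAlgIso C' φ) {M V : Finset K}
    (hV : V ∈ C.basicSets) : φ V ⊆ imageSet C φ M ↔ V ⊆ M := by
  refine ⟨fun hVM => ?_, fun hVM a ha => mem_imageSet.2 ⟨V, hV, hVM, ha⟩⟩
  obtain ⟨v', hv'⟩ := hφ.nonempty hV
  obtain ⟨X, hX, hXM, hv'X⟩ := mem_imageSet.1 (hVM hv')
  rwa [hφ.inj hV hX (C'.eq_of_mem_of_mem (hφ.mem hV) (hφ.mem hX) hv' hv'X)]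

theorem IsAlgIso.one_mem_imageSet (hφ : C.IsAlgIso C' φ) {M : Finset K} (h1 : 1 ∈ M) :
    1 ∈ imageSet C φ M :=
  mem_imageSet.2 ⟨{1}, C.one_mem, by simpa using h1, by simp [hφ.map_one]⟩

theorem IsAlgIso.inv_mem_imageSet (hφ : C.IsAlgIso C' φ) {M : Finset K}
    (hM : ∀ a ∈ M, a⁻¹ ∈ M) {y : K'} (hy : y ∈ imageSet C φ M) :
    y⁻¹ ∈ imageSet C φ M := by
  obtain ⟨X, hX, hXM, hyX⟩ := mem_imageSet.1 hy
  refine mem_imageSet.2 ⟨X.image (·⁻¹), C.inv_mem X hX, ?_, ?_⟩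
  · simpa [image_subset_iff] using fun x hx => hM x (hXM hx)
  · rw [hφ.map_inv hX]
    exact mem_image_of_mem _ hyX

theorem IsAlgIso.mul_mem_imageSet (hφ : C.IsAlgIso C' φ) {M : Finset K} (hM : C.IsASet M)
    (hMmul : ∀ a ∈ M, ∀ b ∈ M, a * b ∈ M) {y y' : K'} (hy : y ∈ imageSet C φ M)
    (hy' : y' ∈ imageSet C φ M) : y * y' ∈ imageSet C φ M := by
  obtain ⟨X, hX, hXM, hyX⟩ := mem_imageSet.1 hy
  obtain ⟨Y, hY, hYM, hy'Y⟩ := mem_imageSet.1 hy'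
  obtain ⟨Z, hZ, hyy', x, hx, x', hx', hxx'⟩ := hφ.exists_mul_mem hX hY hyX hy'Y
  exact mem_imageSet.2
    ⟨Z, hZ, hM Z hZ ⟨_, mem_inter.2 ⟨hxx', hMmul x (hXM hx) x' (hYM hx')⟩⟩, hyy'⟩

def mapSubgroup (hφ : C.IsAlgIso C' φ) (N : Subgroup K) [DecidablePred (· ∈ N)]
    (hN : C.IsASet (univ.filter (· ∈ N))) : Subgroup K' where
  carrier := imageSet C φ (univ.filter (· ∈ N))
  mul_mem' := hφ.mul_mem_imageSet hN (by simpa using fun a ha b hb => N.mul_mem ha hb)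
  one_mem' := hφ.one_mem_imageSet (by simp)
  inv_mem' := hφ.inv_mem_imageSet (by simp)

structure CorrespondingSubgroups (C : SRing K) (C' : SRing K') (φ : Finset K → Finset K')
    (N : Subgroup K) (N' : Subgroup K') [DecidablePred (· ∈ N)] [DecidablePred (· ∈ N')] :
    Prop where
  isAlgIso : C.IsAlgIso C' φ
  isASet : C.IsASet (univ.filter (· ∈ N))
  isASet' : C'.IsASet (univ.filter (· ∈ N'))
  map_subset_iff :
    ∀ V ∈ C.basicSets, φ V ⊆ univ.filter (· ∈ N') ↔ V ⊆ univ.filter (· ∈ N)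

variable {N : Subgroup K} [DecidablePred (· ∈ N)] {N' : Subgroup K'} [DecidablePred (· ∈ N')]

theorem correspondingSubgroups_mapSubgroup (hφ : C.IsAlgIso C' φ)
    (hN : C.IsASet (univ.filter (· ∈ N))) [DecidablePred (· ∈ mapSubgroup hφ N hN)] :
    CorrespondingSubgroups C C' φ N (mapSubgroup hφ N hN) := by
  have hfilter :
      univ.filter (· ∈ mapSubgroup hφ N hN) = imageSet C φ (univ.filter (· ∈ N)) := by
    ext y
    simp [mapSubgroup]
  refine ⟨hφ, hN, hfilter ▸ hφ.isASet_imageSet _, fun V hV => ?_⟩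
  rw [hfilter]
  exact hφ.map_subset_imageSet_iff hV

theorem CorrespondingSubgroups.refl (hN : C.IsASet (univ.filter (· ∈ N))) :
    CorrespondingSubgroups C C id N N :=
  ⟨IsAlgIso.refl C, hN, hN, fun _ _ => Iff.rfl⟩

theorem CorrespondingSubgroups.mem_iff (hc : CorrespondingSubgroups C C' φ N N') {y : K'} :
    y ∈ N' ↔ y ∈ imageSet C φ (univ.filter (· ∈ N)) := by
  refine ⟨fun hy => ?_, fun hy => ?_⟩
  · obtain ⟨Y, hY, hyY⟩ := C'.exists_mem y
    obtain ⟨V, hV, rfl⟩ := hc.isAlgIso.surj hY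
    have hVN' : φ V ⊆ univ.filter (· ∈ N') := hc.isASet' _ hY ⟨y, by simp [hyY, hy]⟩
    exact mem_imageSet.2 ⟨V, hV, (hc.map_subset_iff V hV).1 hVN', hyY⟩
  · obtain ⟨V, hV, hVN, hyV⟩ := mem_imageSet.1 hy
    simpa using (hc.map_subset_iff V hV).2 hVN hyV

theorem CorrespondingSubgroups.mul_mem_map (hc : CorrespondingSubgroups C C' φ N N')
    {X : Finset K} (hX : X ∈ C.basicSets) (hNX : ∀ l ∈ N, ∀ x ∈ X, l * x ∈ X) :
    ∀ l' ∈ N', ∀ y ∈ φ X, l' * y ∈ φ X := by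
  intro l' hl' y hy
  obtain ⟨V, hV, hVN, hl'V⟩ := mem_imageSet.1 (hc.mem_iff.1 hl')
  obtain ⟨Z, hZ, hl'y, v, hv, x, hx, hvx⟩ := hc.isAlgIso.exists_mul_mem hV hX hl'V hy
  rwa [← C.eq_of_mem_of_mem hZ hX hvx (hNX v (by simpa using hVN hv) x hx)]

end ImageSet

section QuotientCounts

variable {K : Type*} [CommGroup K] (N : Subgroup K) [DecidableEq (K ⧸ N)]

def quotImage (X : Finset K) : Finset (K ⧸ N) := X.image (fun g => (QuotientGroup.mk g : K ⧸ N))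

def cosetCount (X : Finset K) (q : K ⧸ N) : ℕ := #(X.filter fun a : K => (a : K ⧸ N) = q)

def pairCount (X Y : Finset K) (q : K ⧸ N) : ℕ :=
  #((X ×ˢ Y).filter fun p : K × K => ((p.1 * p.2 : K) : K ⧸ N) = q)

variable {N}

theorem mk_mem_quotImage {X : Finset K} {x : K} (hx : x ∈ X) : (x : K ⧸ N) ∈ quotImage N X :=
  mem_image_of_mem _ hx

theorem mem_quotImage_iff {X : Finset K} {q : K ⧸ N} :
    q ∈ quotImage N X ↔ 0 < cosetCount N X q := by
  simp [quotImage, cosetCount, card_pos, filter_nonempty_iff]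

theorem mem_of_mk_mem_quotImage {Y : Finset K} (hY : ∀ l ∈ N, ∀ y ∈ Y, l * y ∈ Y) {z : K}
    (hz : (z : K ⧸ N) ∈ quotImage N Y) : z ∈ Y := by
  obtain ⟨y, hy, hyz⟩ := mem_image.1 hz
  simpa using hY _ (QuotientGroup.eq.1 hyz) y hy

theorem cosetCount_eq_structConst [Fintype K] [DecidableEq K] [DecidablePred (· ∈ N)]
    (X : Finset K) (z : K) :
    cosetCount N X z = structConst X (univ.filter (· ∈ N)) z := by
  refine card_nbij (fun a => (a, a⁻¹ * z)) (fun a ha => ?_) (fun a _ b _ h => (Prod.mk.inj h).1)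
    (fun p hp => ?_)
  · simp only [coe_filter, Set.mem_ofPred_eq] at ha
    simp [ha.1, QuotientGroup.eq.1 ha.2]
  · simp only [coe_filter, mem_product, mem_filter, mem_univ, true_and,
      Set.mem_ofPred_eq] at hp
    refine ⟨p.1, mem_filter.2 ⟨hp.1.1, QuotientGroup.eq.2 ?_⟩, Prod.ext rfl ?_⟩ <;>
      simp [← hp.2, hp.1.2]

variable [Fintype K] [DecidableEq K] (C : SRing K)

theorem sum_structConst_filter {W X Y : Finset K} (hW : W ∈ C.basicSets)
    (hX : X ∈ C.basicSets) (hY : Y ∈ C.basicSets) {w : K} (hw : w ∈ W) (q : K ⧸ N) :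
    ∑ a ∈ W.filter (fun a : K => (a : K ⧸ N) = q), structConst X Y a =
      cosetCount N W q * structConst X Y w := by
  rw [cosetCount, ← smul_eq_mul, ← sum_const]
  exact sum_congr rfl fun a ha => C.structConst_eq X hX Y hY W hW a (mem_filter.1 ha).1 w hw

theorem pairCount_eq_sum (X Y : Finset K) (q : K ⧸ N) :
    pairCount N X Y q = ∑ W ∈ C.basicSets,
      ∑ a ∈ W.filter (fun a : K => (a : K ⧸ N) = q), structConst X Y a := by
  rw [← sum_biUnion fun W hW V hV h => disjoint_filter_filter (C.disj W hW V hV h),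
    ← filter_biUnion, biUnion_basicSets]
  unfold pairCount structConst
  rw [card_eq_sum_card_fiberwise (f := fun p : K × K => p.1 * p.2)
    (t := univ.filter fun a : K => (a : K ⧸ N) = q) (fun p hp => by
      rw [mem_coe, mem_filter] at hp; simpa using hp.2)]
  refine sum_congr rfl fun a ha => congr_arg card (by
    rw [filter_filter]
    exact filter_congr fun p _ => ⟨And.right, fun h => ⟨h ▸ (mem_filter.1 ha).2, h⟩⟩)

end QuotientCounts

section CorrespondingQuotients

variable {K K' : Type*} [CommGroup K] [Fintype K] [DecidableEq K]
  [CommGroup K'] [Fintype K'] [DecidableEq K']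
variable {C : SRing K} {C' : SRing K'} {φ : Finset K → Finset K'}
variable {N : Subgroup K} [DecidablePred (· ∈ N)] [DecidableEq (K ⧸ N)]
variable {N' : Subgroup K'} [DecidablePred (· ∈ N')] [DecidableEq (K' ⧸ N')]

theorem CorrespondingSubgroups.cosetCount_eq (hc : CorrespondingSubgroups C C' φ N N')
    {W Z : Finset K} (hW : W ∈ C.basicSets) (hZ : Z ∈ C.basicSets) {z : K} {z' : K'}
    (hz : z ∈ Z) (hz' : z' ∈ φ Z) : cosetCount N W z = cosetCount N' (φ W) z' := by
  rw [cosetCount_eq_structConst, cosetCount_eq_structConst,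
    structConst_eq_sum_of_isASet C hc.isASet, structConst_eq_sum_of_isASet C' hc.isASet']
  refine sum_bij (fun V _ => φ V) (fun V hV => ?_) (fun V₁ hV₁ V₂ hV₂ h => ?_)
    (fun V' hV' => ?_) (fun V hV => ?_)
  · rw [mem_filter] at hV ⊢
    exact ⟨hc.isAlgIso.mem hV.1, (hc.map_subset_iff V hV.1).2 hV.2⟩
  · exact hc.isAlgIso.inj (mem_filter.1 hV₁).1 (mem_filter.1 hV₂).1 h
  · rw [mem_filter] at hV'
    obtain ⟨V, hV, rfl⟩ := hc.isAlgIso.surj hV'.1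
    exact ⟨V, mem_filter.2 ⟨hV, (hc.map_subset_iff V hV).1 hV'.2⟩, rfl⟩
  · exact hc.isAlgIso.2 W hW V (mem_filter.1 hV).1 Z hZ z hz z' hz'

theorem CorrespondingSubgroups.mk_mem_quotImage_iff (hc : CorrespondingSubgroups C C' φ N N')
    {W Z : Finset K} (hW : W ∈ C.basicSets) (hZ : Z ∈ C.basicSets) {z : K} {z' : K'}
    (hz : z ∈ Z) (hz' : z' ∈ φ Z) :
    (z : K ⧸ N) ∈ quotImage N W ↔ (z' : K' ⧸ N') ∈ quotImage N' (φ W) := by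
  rw [mem_quotImage_iff, mem_quotImage_iff, hc.cosetCount_eq hW hZ hz hz']

variable (C)

theorem cosetCount_congr (hN : C.IsASet (univ.filter (· ∈ N))) {W Z : Finset K}
    (hW : W ∈ C.basicSets) (hZ : Z ∈ C.basicSets) {z z₀ : K} (hz : z ∈ Z)
    (hz₀ : z₀ ∈ Z) :
    cosetCount N W z = cosetCount N W z₀ :=
  (CorrespondingSubgroups.refl hN).cosetCount_eq hW hZ hz hz₀

theorem quotImage_eq_iff (hN : C.IsASet (univ.filter (· ∈ N))) {X Y : Finset K}
    (hX : X ∈ C.basicSets) (hY : Y ∈ C.basicSets) {x : K} (hx : x ∈ X) :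
    quotImage N X = quotImage N Y ↔ (x : K ⧸ N) ∈ quotImage N Y := by
  have hc := CorrespondingSubgroups.refl (C := C) hN
  refine ⟨fun h => h ▸ mk_mem_quotImage hx, fun hxY => ?_⟩
  obtain ⟨y, hy, hyx⟩ := mem_image.1 hxY
  refine Subset.antisymm (fun q hq => ?_) (fun q hq => ?_)
  · obtain ⟨a, ha, rfl⟩ := mem_image.1 hq
    exact (hc.mk_mem_quotImage_iff hY hX ha hx).2 hxY
  · obtain ⟨b, hb, rfl⟩ := mem_image.1 hq
    exact (hc.mk_mem_quotImage_iff hX hY hb hy).2 (hyx ▸ mk_mem_quotImage hx)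

theorem pairCount_eq_mul (hN : C.IsASet (univ.filter (· ∈ N))) {X Y : Finset K}
    (hX : X ∈ C.basicSets) (hY : Y ∈ C.basicSets) {x₀ y₀ : K} (hx₀ : x₀ ∈ X)
    (hy₀ : y₀ ∈ Y) (q : K ⧸ N) :
    pairCount N X Y q =
      cosetCount N X x₀ * cosetCount N Y y₀ *
        structConst (quotImage N X) (quotImage N Y) q := by
  unfold pairCount structConst
  rw [card_eq_sum_card_fiberwise (f := fun p : K × K => ((p.1 : K ⧸ N), (p.2 : K ⧸ N)))
    (t := (quotImage N X ×ˢ quotImage N Y).filter fun r => r.1 * r.2 = q) (fun p hp => ?_),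
    mul_comm, ← smul_eq_mul, ← sum_const]
  · refine sum_congr rfl fun r hr => ?_
    simp only [mem_filter, mem_product] at hr
    obtain ⟨⟨hr₁, hr₂⟩, hrq⟩ := hr
    obtain ⟨a, ha, hra⟩ := mem_image.1 hr₁
    obtain ⟨b, hb, hrb⟩ := mem_image.1 hr₂
    have hfiber : ((X ×ˢ Y).filter fun p : K × K => ((p.1 * p.2 : K) : K ⧸ N) = q).filter
        (fun p : K × K => ((p.1 : K ⧸ N), (p.2 : K ⧸ N)) = r) =
        (X.filter fun c : K => (c : K ⧸ N) = r.1) ×ˢ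
          (Y.filter fun c : K => (c : K ⧸ N) = r.2) := by
      ext p
      simp only [mem_filter, mem_product, Prod.ext_iff]
      constructor
      · rintro ⟨⟨⟨h₁, h₂⟩, -⟩, h₃, h₄⟩
        exact ⟨⟨h₁, h₃⟩, h₂, h₄⟩
      · rintro ⟨⟨h₁, h₃⟩, h₂, h₄⟩
        exact ⟨⟨⟨h₁, h₂⟩, by rw [QuotientGroup.mk_mul, h₃, h₄, hrq]⟩, h₃, h₄⟩
    rw [hfiber, card_product, ← hra, ← hrb]
    exact congr_arg₂ (· * ·) (cosetCount_congr C hN hX hX ha hx₀)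
      (cosetCount_congr C hN hY hY hb hy₀)
  · simp only [mem_coe, mem_filter, mem_product] at hp ⊢
    exact ⟨⟨mk_mem_quotImage hp.1.1, mk_mem_quotImage hp.1.2⟩, by rw [← hp.2]; rfl⟩

variable {C}

theorem CorrespondingSubgroups.pairCount_eq (hc : CorrespondingSubgroups C C' φ N N')
    {X Y Z : Finset K} (hX : X ∈ C.basicSets) (hY : Y ∈ C.basicSets) (hZ : Z ∈ C.basicSets)
    {z : K} {z' : K'} (hz : z ∈ Z) (hz' : z' ∈ φ Z) :
    pairCount N X Y z = pairCount N' (φ X) (φ Y) z' := by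
  have hφ := hc.isAlgIso
  rw [pairCount_eq_sum C, pairCount_eq_sum C']
  refine sum_bij (fun W _ => φ W) (fun W hW => hφ.mem hW)
    (fun _ h₁ _ h₂ h => hφ.inj h₁ h₂ h)
    (fun W' hW' => let ⟨W, hW, h⟩ := hφ.surj hW'; ⟨W, hW, h⟩) (fun W hW => ?_)
  obtain ⟨w, hw⟩ := C.nonempty_mem W hW
  obtain ⟨w', hw'⟩ := hφ.nonempty hW
  rw [sum_structConst_filter C hW hX hY hw, sum_structConst_filter C' (hφ.mem hW) (hφ.mem hX)
    (hφ.mem hY) hw', hc.cosetCount_eq hW hZ hz hz', hφ.2 X hX Y hY W hW w hw w' hw']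

/-- Counting the pairs of `X × Y` whose product lies in a given coset in two ways
(`pairCount_eq_mul`, `pairCount_eq_sum`) expresses the structure constants of the quotient
through those of `C`, which `φ` preserves. -/
theorem CorrespondingSubgroups.structConst_quotImage_eq
    (hc : CorrespondingSubgroups C C' φ N N') {X Y Z : Finset K} (hX : X ∈ C.basicSets)
    (hY : Y ∈ C.basicSets) (hZ : Z ∈ C.basicSets) {z : K} {z' : K'} (hz : z ∈ Z)
    (hz' : z' ∈ φ Z) :
    structConst (quotImage N X) (quotImage N Y) z =
      structConst (quotImage N' (φ X)) (quotImage N' (φ Y)) z' := by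
  have hφ := hc.isAlgIso
  obtain ⟨x, hx⟩ := C.nonempty_mem X hX
  obtain ⟨y, hy⟩ := C.nonempty_mem Y hY
  obtain ⟨x', hx'⟩ := hφ.nonempty hX
  obtain ⟨y', hy'⟩ := hφ.nonempty hY
  have h := hc.pairCount_eq hX hY hZ hz hz'
  rw [pairCount_eq_mul C hc.isASet hX hY hx hy, pairCount_eq_mul C' hc.isASet' (hφ.mem hX)
    (hφ.mem hY) hx' hy', ← hc.cosetCount_eq hX hX hx hx', ← hc.cosetCount_eq hY hY hy hy'] at h
  exact Nat.eq_of_mul_eq_mul_left (Nat.mul_pos (mem_quotImage_iff.1 (mk_mem_quotImage hx))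
    (mem_quotImage_iff.1 (mk_mem_quotImage hy))) h

theorem CorrespondingSubgroups.quotImage_map_eq_iff (hc : CorrespondingSubgroups C C' φ N N')
    {X Y : Finset K} (hX : X ∈ C.basicSets) (hY : Y ∈ C.basicSets) :
    quotImage N' (φ X) = quotImage N' (φ Y) ↔ quotImage N X = quotImage N Y := by
  obtain ⟨x, hx⟩ := C.nonempty_mem X hX
  obtain ⟨x', hx'⟩ := hc.isAlgIso.nonempty hX
  rw [quotImage_eq_iff C' hc.isASet' (hc.isAlgIso.mem hX) (hc.isAlgIso.mem hY) hx',
    quotImage_eq_iff C hc.isASet hX hY hx]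
  exact (hc.mk_mem_quotImage_iff hY hX hx hx').symm

end CorrespondingQuotients

section QuotientSRing

variable {K : Type*} [CommGroup K] [Fintype K] [DecidableEq K]
variable {N : Subgroup K} [DecidablePred (· ∈ N)] [Fintype (K ⧸ N)] [DecidableEq (K ⧸ N)]

def quotSR (C : SRing K) (hN : C.IsASet (univ.filter (· ∈ N))) : SRing (K ⧸ N) where
  basicSets := C.basicSets.image (quotImage N)
  nonempty_mem Q hQ := by
    obtain ⟨X, hX, rfl⟩ := mem_image.1 hQ
    exact (C.nonempty_mem X hX).image _
  exists_mem q := by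
    obtain ⟨g, rfl⟩ := QuotientGroup.mk_surjective q
    obtain ⟨X, hX, hg⟩ := C.exists_mem g
    exact ⟨_, mem_image_of_mem _ hX, mk_mem_quotImage hg⟩
  disj Q hQ Q' hQ' hne := by
    obtain ⟨X, hX, rfl⟩ := mem_image.1 hQ
    obtain ⟨Y, hY, rfl⟩ := mem_image.1 hQ'
    refine disjoint_left.2 fun q hqX hqY => hne ?_
    obtain ⟨x, hx, rfl⟩ := mem_image.1 hqX
    exact (quotImage_eq_iff C hN hX hY hx).2 hqY
  one_mem := mem_image.2 ⟨{1}, C.one_mem, by simp [quotImage]⟩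
  inv_mem Q hQ := by
    obtain ⟨X, hX, rfl⟩ := mem_image.1 hQ
    exact mem_image.2 ⟨_, C.inv_mem X hX, by simp [quotImage, image_image, Function.comp_def]⟩
  structConst_eq Q hQ Q' hQ' Q'' hQ'' q hq q' hq' := by
    obtain ⟨X, hX, rfl⟩ := mem_image.1 hQ
    obtain ⟨Y, hY, rfl⟩ := mem_image.1 hQ'
    obtain ⟨Z, hZ, rfl⟩ := mem_image.1 hQ''
    obtain ⟨z, hz, rfl⟩ := mem_image.1 hq
    obtain ⟨z', hz', rfl⟩ := mem_image.1 hq'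
    exact (CorrespondingSubgroups.refl hN).structConst_quotImage_eq hX hY hZ hz hz'

end QuotientSRing

section QuotientMap

variable {K K' : Type*} [CommGroup K] [Fintype K] [DecidableEq K] [CommGroup K']

/-- `quotMap` sends `X/N` to `(φ X)/N'`; by `quotImage_map_eq_iff` this does not depend on the
basic set `X` chosen by `invFunOn`. -/
noncomputable def quotMap (C : SRing K) (N : Subgroup K) (N' : Subgroup K')
    [DecidableEq (K ⧸ N)] [DecidableEq (K' ⧸ N')] (φ : Finset K → Finset K')
    (Q : Finset (K ⧸ N)) : Finset (K' ⧸ N') :=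
  quotImage N' (φ (Function.invFunOn (quotImage N) (C.basicSets : Set (Finset K)) Q))

variable [Fintype K'] [DecidableEq K'] {C : SRing K} {C' : SRing K'} {φ : Finset K → Finset K'}
variable {N : Subgroup K} [DecidablePred (· ∈ N)] [DecidableEq (K ⧸ N)]
variable {N' : Subgroup K'} [DecidablePred (· ∈ N')] [DecidableEq (K' ⧸ N')]

theorem CorrespondingSubgroups.quotMap_quotImage (hc : CorrespondingSubgroups C C' φ N N')
    {X : Finset K} (hX : X ∈ C.basicSets) :
    quotMap C N N' φ (quotImage N X) = quotImage N' (φ X) :=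
  have h : ∃ Y ∈ (C.basicSets : Set (Finset K)), quotImage N Y = quotImage N X :=
    ⟨X, hX, rfl⟩
  (hc.quotImage_map_eq_iff (Function.invFunOn_mem h) hX).2 (Function.invFunOn_eq h)

variable [Fintype (K ⧸ N)] [Fintype (K' ⧸ N')]

theorem CorrespondingSubgroups.isAlgIso_quotMap (hc : CorrespondingSubgroups C C' φ N N') :
    (C.quotSR hc.isASet).IsAlgIso (C'.quotSR hc.isASet') (quotMap C N N' φ) := by
  have hφ := hc.isAlgIso
  refine ⟨⟨fun Q hQ => ?_, fun Q hQ Q' hQ' h => ?_, fun Q' hQ' => ?_⟩,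
    fun Q hQ Q' hQ' Q'' hQ'' q hq q' hq' => ?_⟩
  · obtain ⟨X, hX, rfl⟩ := mem_image.1 hQ
    rw [hc.quotMap_quotImage hX]
    exact mem_image_of_mem _ (hφ.mem hX)
  · obtain ⟨X, hX, rfl⟩ := mem_image.1 hQ
    obtain ⟨Y, hY, rfl⟩ := mem_image.1 hQ'
    rw [hc.quotMap_quotImage hX, hc.quotMap_quotImage hY] at h
    exact (hc.quotImage_map_eq_iff hX hY).1 h
  · obtain ⟨Y, hY, rfl⟩ := mem_image.1 hQ'
    obtain ⟨X, hX, rfl⟩ := hφ.surj hY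
    exact ⟨quotImage N X, mem_image_of_mem _ hX, hc.quotMap_quotImage hX⟩
  · obtain ⟨X, hX, rfl⟩ := mem_image.1 hQ
    obtain ⟨Y, hY, rfl⟩ := mem_image.1 hQ'
    obtain ⟨Z, hZ, rfl⟩ := mem_image.1 hQ''
    rw [hc.quotMap_quotImage hZ] at hq'
    rw [hc.quotMap_quotImage hX, hc.quotMap_quotImage hY]
    obtain ⟨z, hz, rfl⟩ := mem_image.1 hq
    obtain ⟨z', hz', rfl⟩ := mem_image.1 hq'
    exact hc.structConst_quotImage_eq hX hY hZ hz hz'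

theorem Induces.mul_inv_mem_quotImage_iff (hc : CorrespondingSubgroups C C' φ N N')
    {fbar : K ⧸ N → K' ⧸ N'}
    (hf : (C.quotSR hc.isASet).Induces (C'.quotSR hc.isASet') (quotMap C N N' φ) fbar)
    {X : Finset K} (hX : X ∈ C.basicSets) (a b : K ⧸ N) :
    b * a⁻¹ ∈ quotImage N X ↔ fbar b * (fbar a)⁻¹ ∈ quotImage N' (φ X) := by
  rw [← hc.quotMap_quotImage hX]
  exact hf.2 _ (mem_image_of_mem _ hX) a b

end QuotientMap

section SubSRing

variable {K : Type*} [Group K] [Fintype K] [DecidableEq K] {P : Subgroup K}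
  [DecidablePred (· ∈ P)]

theorem structConst_subtype {X Y : Finset K} (hX : X ⊆ univ.filter (· ∈ P))
    (hY : Y ⊆ univ.filter (· ∈ P)) (z : P) :
    structConst (X.subtype (· ∈ P)) (Y.subtype (· ∈ P)) z = structConst X Y z := by
  unfold structConst
  refine card_nbij (fun p => ((p.1 : K), (p.2 : K))) (fun p hp => ?_)
    (fun p _ p' _ h => ?_) (fun p hp => ?_)
  · simp only [mem_coe, mem_filter, mem_product, mem_subtype] at hp ⊢
    exact ⟨hp.1, by rw [← hp.2]; rfl⟩
  · simp only [Prod.mk.injEq] at h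
    exact Prod.ext (Subtype.ext h.1) (Subtype.ext h.2)
  · simp only [coe_filter, mem_product, Set.mem_ofPred_eq] at hp
    have hp₁ : p.1 ∈ P := by simpa using hX hp.1.1
    have hp₂ : p.2 ∈ P := by simpa using hY hp.1.2
    refine ⟨(⟨p.1, hp₁⟩, ⟨p.2, hp₂⟩), ?_, rfl⟩
    simp only [coe_filter, mem_product, mem_subtype, Set.mem_ofPred_eq]
    exact ⟨hp.1, Subtype.ext hp.2⟩

def subSR (C : SRing K) (hP : C.IsASet (univ.filter (· ∈ P))) : SRing P where
  basicSets :=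
    (C.basicSets.filter (· ⊆ univ.filter (· ∈ P))).image (Finset.subtype (· ∈ P))
  nonempty_mem T hT := by
    obtain ⟨X, hX, rfl⟩ := mem_image.1 hT
    obtain ⟨x, hx⟩ := C.nonempty_mem X (mem_filter.1 hX).1
    exact ⟨⟨x, by simpa using (mem_filter.1 hX).2 hx⟩, mem_subtype.2 hx⟩
  exists_mem u := by
    obtain ⟨X, hX, hu⟩ := C.exists_mem u
    have hXP : X ⊆ univ.filter (· ∈ P) := hP X hX ⟨u, by simp [hu]⟩
    exact ⟨_, mem_image_of_mem _ (mem_filter.2 ⟨hX, hXP⟩), mem_subtype.2 hu⟩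
  disj T hT T' hT' hne := by
    obtain ⟨X, hX, rfl⟩ := mem_image.1 hT
    obtain ⟨X', hX', rfl⟩ := mem_image.1 hT'
    refine disjoint_left.2 fun u hu hu' => hne ?_
    rw [C.eq_of_mem_of_mem (mem_filter.1 hX).1 (mem_filter.1 hX').1 (mem_subtype.1 hu)
      (mem_subtype.1 hu')]
  one_mem := by
    refine mem_image.2 ⟨{1}, mem_filter.2 ⟨C.one_mem, by simp⟩, ?_⟩
    ext u
    simp only [mem_subtype, mem_singleton]
    exact ⟨fun h => Subtype.ext h, fun h => h ▸ rfl⟩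
  inv_mem T hT := by
    obtain ⟨X, hX, rfl⟩ := mem_image.1 hT
    have hXP := (mem_filter.1 hX).2
    refine mem_image.2
      ⟨X.image (·⁻¹), mem_filter.2 ⟨C.inv_mem X (mem_filter.1 hX).1, ?_⟩, ?_⟩
    · simpa [image_subset_iff] using fun x hx => by simpa using hXP hx
    · ext u
      simp only [mem_subtype, mem_image]
      constructor
      · rintro ⟨x, hx, hxu⟩
        exact ⟨⟨x, by simpa using hXP hx⟩, hx, Subtype.ext hxu⟩
      · rintro ⟨v, hv, rfl⟩
        exact ⟨v, hv, rfl⟩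
  structConst_eq T hT T' hT' T'' hT'' z hz z' hz' := by
    obtain ⟨X, hX, rfl⟩ := mem_image.1 hT
    obtain ⟨Y, hY, rfl⟩ := mem_image.1 hT'
    obtain ⟨Z, hZ, rfl⟩ := mem_image.1 hT''
    rw [mem_filter] at hX hY hZ
    rw [structConst_subtype hX.2 hY.2, structConst_subtype hX.2 hY.2]
    exact C.structConst_eq X hX.1 Y hY.1 Z hZ.1 z (mem_subtype.1 hz) z' (mem_subtype.1 hz')

theorem mem_subSR_basicSets {C : SRing K} {hP : C.IsASet (univ.filter (· ∈ P))}
    {T : Finset P} :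
    T ∈ (C.subSR hP).basicSets ↔
      ∃ X ∈ C.basicSets, X ⊆ univ.filter (· ∈ P) ∧ X.subtype (· ∈ P) = T := by
  simp [subSR, and_assoc]

end SubSRing

section RestrictMap

variable {K K' : Type*} [Group K] [Fintype K] [Group K']

def restrictMap (P : Subgroup K) (P' : Subgroup K') [DecidablePred (· ∈ P')]
    (φ : Finset K → Finset K') (T : Finset P) : Finset P' :=
  (φ (T.map (Function.Embedding.subtype _))).subtype (· ∈ P')

variable {P : Subgroup K} [DecidablePred (· ∈ P)] {P' : Subgroup K'} [DecidablePred (· ∈ P')]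
  {φ : Finset K → Finset K'}

theorem restrictMap_subtype {X : Finset K} (hX : X ⊆ univ.filter (· ∈ P)) :
    restrictMap P P' φ (X.subtype (· ∈ P)) = (φ X).subtype (· ∈ P') := by
  rw [restrictMap, subtype_map_of_mem fun x hx => by simpa using hX hx]

variable [DecidableEq K] [Fintype K'] [DecidableEq K'] {C : SRing K} {C' : SRing K'}

theorem CorrespondingSubgroups.isAlgIso_restrictMap (hc : CorrespondingSubgroups C C' φ P P') :
    (C.subSR hc.isASet).IsAlgIso (C'.subSR hc.isASet') (restrictMap P P' φ) := by
  have hφ := hc.isAlgIso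
  have hsub := fun {X} (hX : X ∈ C.basicSets) => (hc.map_subset_iff X hX).2
  refine ⟨⟨fun T hT => ?_, fun T hT T' hT' h => ?_, fun T' hT' => ?_⟩,
    fun T hT T' hT' T'' hT'' z hz z' hz' => ?_⟩
  · obtain ⟨X, hX, hXP, rfl⟩ := mem_subSR_basicSets.1 hT
    rw [restrictMap_subtype hXP]
    exact mem_subSR_basicSets.2 ⟨φ X, hφ.mem hX, hsub hX hXP, rfl⟩
  · obtain ⟨X, hX, hXP, rfl⟩ := mem_subSR_basicSets.1 hT
    obtain ⟨Y, hY, hYP, rfl⟩ := mem_subSR_basicSets.1 hT'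
    rw [restrictMap_subtype hXP, restrictMap_subtype hYP] at h
    have h' := congr_arg (Finset.map (Function.Embedding.subtype (· ∈ P'))) h
    rw [subtype_map_of_mem fun x hx => by simpa using hsub hX hXP hx,
      subtype_map_of_mem fun x hx => by simpa using hsub hY hYP hx] at h'
    rw [hφ.inj hX hY h']
  · obtain ⟨Y, hY, hYP, rfl⟩ := mem_subSR_basicSets.1 hT'
    obtain ⟨X, hX, rfl⟩ := hφ.surj hY
    have hXP := (hc.map_subset_iff X hX).1 hYP
    exact ⟨_, mem_subSR_basicSets.2 ⟨X, hX, hXP, rfl⟩, restrictMap_subtype hXP⟩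
  · obtain ⟨X, hX, hXP, rfl⟩ := mem_subSR_basicSets.1 hT
    obtain ⟨Y, hY, hYP, rfl⟩ := mem_subSR_basicSets.1 hT'
    obtain ⟨Z, hZ, hZP, rfl⟩ := mem_subSR_basicSets.1 hT''
    rw [restrictMap_subtype hZP] at hz'
    rw [restrictMap_subtype hXP, restrictMap_subtype hYP, structConst_subtype hXP hYP,
      structConst_subtype (hsub hX hXP) (hsub hY hYP)]
    exact hφ.2 X hX Y hY Z hZ z (mem_subtype.1 hz) z' (mem_subtype.1 hz')

end RestrictMap

section SectionMap

variable {G : Type*} [CommGroup G] (U L : Subgroup G)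

def sectionMap : U ⧸ L.subgroupOf U →* G ⧸ L := QuotientGroup.map _ _ U.subtype le_rfl

variable {U L}

@[simp]
theorem sectionMap_mk (u : U) : sectionMap U L u = ((u : G) : G ⧸ L) := rfl

theorem sectionMap_mem_quotImage_iff [Fintype G] [DecidablePred (· ∈ U)] [DecidableEq (G ⧸ L)]
    [DecidableEq (U ⧸ L.subgroupOf U)] {X : Finset G} (hX : X ⊆ univ.filter (· ∈ U))
    (t : U ⧸ L.subgroupOf U) :
    t ∈ quotImage (L.subgroupOf U) (X.subtype (· ∈ U)) ↔
      sectionMap U L t ∈ quotImage L X := by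
  obtain ⟨u, rfl⟩ := QuotientGroup.mk_surjective t
  simp only [quotImage, mem_image, mem_subtype, sectionMap_mk, QuotientGroup.eq,
    Subgroup.mem_subgroupOf]
  constructor
  · rintro ⟨v, hv, hvu⟩
    exact ⟨v, hv, hvu⟩
  · rintro ⟨x, hx, hxu⟩
    exact ⟨⟨x, by simpa using hX hx⟩, hx, hxu⟩

end SectionMap

section Glue

variable {G H : Type*} [CommGroup G] [CommGroup H] {U L : Subgroup G} {L' : Subgroup H}

variable (U) in
theorem mul_inv_out_mem (x : G) : x * ((x : G ⧸ U).out)⁻¹ ∈ U := by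
  have h := QuotientGroup.eq.1 (QuotientGroup.out_eq' (x : G ⧸ U))
  rwa [mul_comm] at h

noncomputable def glue (ψ : G → U → H) (fbar : G ⧸ L → H ⧸ L') (x : G) : H :=
  ψ (x : G ⧸ U).out ⟨x * ((x : G ⧸ U).out)⁻¹, mul_inv_out_mem U x⟩ *
    (fbar ((x : G ⧸ U).out : G)).out

variable {ψ : G → U → H} {fbar : G ⧸ L → H ⧸ L'}

theorem glue_eq {x c : G} (hc : (x : G ⧸ U).out = c) :
    glue ψ fbar x = ψ c ⟨x * c⁻¹, hc ▸ mul_inv_out_mem U x⟩ * (fbar c).out := by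
  subst hc; rfl

theorem mk_glue (hψ : ∀ c (u : U), (ψ c u : H ⧸ L') = fbar ((u : G) * c) * (fbar c)⁻¹)
    (x : G) : ((glue ψ fbar x : H) : H ⧸ L') = fbar x := by
  rw [glue_eq rfl, QuotientGroup.mk_mul, hψ, QuotientGroup.out_eq', inv_mul_cancel_right,
    ← QuotientGroup.mk_mul]
  exact congr_arg (fbar ∘ (↑)) (inv_mul_cancel_right x _)

end Glue

section Wreath

variable {G H : Type*} [CommGroup G] [Fintype G] [DecidableEq G]
  [CommGroup H] [Fintype H] [DecidableEq H]
  {A : SRing G} {B : SRing H} {φ : Finset G → Finset H}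
  {U : Subgroup G} [DecidablePred (· ∈ U)] {U' : Subgroup H} [DecidablePred (· ∈ U')]
  {L : Subgroup G} [DecidableEq (G ⧸ L)] {L' : Subgroup H} [DecidableEq (H ⧸ L')]

variable (A φ U) in
def InducesOn (ψ : U → H) : Prop :=
  ∀ X ∈ A.basicSets, X ⊆ univ.filter (· ∈ U) →
    ∀ u v : U, (v : G) * (u : G)⁻¹ ∈ X → ψ v * (ψ u)⁻¹ ∈ φ X

theorem InducesOn.mk_mem_quotImage_iff [DecidablePred (· ∈ L)] [DecidablePred (· ∈ L')]
    {ψ : U → H} (hψ : InducesOn A φ U ψ)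
    (hUA : A.IsASet (univ.filter (· ∈ U))) (hL : CorrespondingSubgroups A B φ L L')
    {X : Finset G} (hX : X ∈ A.basicSets) (u v : U) :
    (((v : G) * (u : G)⁻¹ : G) : G ⧸ L) ∈ quotImage L X ↔
      ((ψ v * (ψ u)⁻¹ : H) : H ⧸ L') ∈ quotImage L' (φ X) := by
  obtain ⟨W, hW, hvu⟩ := A.exists_mem ((v : G) * (u : G)⁻¹)
  have hWU : W ⊆ univ.filter (· ∈ U) :=
    hUA W hW ⟨_, mem_inter.2 ⟨hvu, by simp [U.mul_mem v.2 (U.inv_mem u.2)]⟩⟩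
  exact hL.mk_mem_quotImage_iff hX hW hvu (hψ W hW hWU u v hvu)

theorem InducesOn.mk_eq_mk_iff [DecidablePred (· ∈ L)] [DecidablePred (· ∈ L')]
    {ψ : U → H} (hψ : InducesOn A φ U ψ)
    (hUA : A.IsASet (univ.filter (· ∈ U))) (hL : CorrespondingSubgroups A B φ L L') (u v : U) :
    ((ψ u : H) : H ⧸ L') = ψ v ↔ ((u : G) : G ⧸ L) = v := by
  have h := hψ.mk_mem_quotImage_iff hUA hL A.one_mem v u
  simp only [hL.isAlgIso.map_one, quotImage, image_singleton, mem_singleton,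
    QuotientGroup.mk_mul, QuotientGroup.mk_inv, QuotientGroup.mk_one, mul_inv_eq_one] at h
  exact h.symm

theorem Induces.inducesOn_restrictMap {hUA : A.IsASet (univ.filter (· ∈ U))}
    {hU'B : B.IsASet (univ.filter (· ∈ U'))} {fU : U → U'}
    (hfU : (A.subSR hUA).Induces (B.subSR hU'B) (restrictMap U U' φ) fU) :
    InducesOn A φ U (fun u => (fU u : H)) := by
  intro X hX hXU u v hvu
  have h := (hfU.2 _ (mem_subSR_basicSets.2 ⟨X, hX, hXU, rfl⟩) u v).1 (mem_subtype.2 hvu)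
  rw [restrictMap_subtype hXU] at h
  exact mem_subtype.1 h

theorem exists_mk_eq_mul_inv (hU : CorrespondingSubgroups A B φ U U') {fU : U → U'}
    (hfU : Function.Surjective fU) {fbar : G ⧸ L → H ⧸ L'}
    (hfbar : ∀ X ∈ A.basicSets, ∀ a b : G ⧸ L,
      b * a⁻¹ ∈ quotImage L X ↔ fbar b * (fbar a)⁻¹ ∈ quotImage L' (φ X))
    (c : G) (t : U ⧸ L.subgroupOf U) :
    ∃ v : U, ((fU v : H) : H ⧸ L') = fbar (sectionMap U L t * c) * (fbar c)⁻¹ := by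
  obtain ⟨u, rfl⟩ := QuotientGroup.mk_surjective t
  obtain ⟨X, hX, hu⟩ := A.exists_mem (u : G)
  have hXU : X ⊆ univ.filter (· ∈ U) := hU.isASet X hX ⟨u, by simp [hu]⟩
  have h := (hfbar X hX c (sectionMap U L u * c)).1 (by simpa using mk_mem_quotImage hu)
  obtain ⟨y, hy, hyq⟩ := mem_image.1 h
  obtain ⟨v, hv⟩ := hfU ⟨y, by simpa using (hU.map_subset_iff X hX).2 hXU hy⟩
  exact ⟨v, by rw [hv]; exact hyq⟩

theorem IsAlgIso.induces_glue {ψ : G → U → H} {fbar : G ⧸ L → H ⧸ L'}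
    (hφ : A.IsAlgIso B φ)
    (hsat : ∀ X ∈ A.basicSets, ¬ X ⊆ univ.filter (· ∈ U) →
      ∀ l ∈ L', ∀ y ∈ φ X, l * y ∈ φ X)
    (hfbar : ∀ X ∈ A.basicSets, ∀ a b : G ⧸ L,
      b * a⁻¹ ∈ quotImage L X ↔ fbar b * (fbar a)⁻¹ ∈ quotImage L' (φ X))
    (hψ : ∀ c, InducesOn A φ U (ψ c))
    (hψL : ∀ c (u : U), (ψ c u : H ⧸ L') = fbar ((u : G) * c) * (fbar c)⁻¹) :
    A.Induces B φ (glue ψ fbar) := by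
  refine hφ.induces_of_forall_mem _ fun X hX g h hhg => ?_
  by_cases hXU : X ⊆ univ.filter (· ∈ U)
  · have hgh : (h : G ⧸ U) = g := by
      rw [eq_comm, QuotientGroup.eq, mul_comm]
      simpa using hXU hhg
    rw [glue_eq (x := g) rfl, glue_eq (congr_arg Quotient.out hgh), mul_inv_rev, mul_assoc,
      mul_inv_cancel_left]
    refine hψ _ X hX hXU _ _ ?_
    show h * _⁻¹ * (g * _⁻¹)⁻¹ ∈ X
    rwa [mul_inv_rev, inv_inv, mul_assoc, inv_mul_cancel_left]
  · refine mem_of_mk_mem_quotImage (hsat X hX hXU) ?_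
    rw [QuotientGroup.mk_mul, QuotientGroup.mk_inv, mk_glue hψL, mk_glue hψL, ← hfbar X hX,
      ← QuotientGroup.mk_inv, ← QuotientGroup.mk_mul]
    exact mk_mem_quotImage hhg

variable [DecidablePred (· ∈ L)] [DecidablePred (· ∈ L')]
  [DecidableEq (U ⧸ L.subgroupOf U)]

/-- `t ↦ w t` is an automorphism of the section because `fbar` and `fU` both transport the basic
sets of `A` to those of `B`. -/
theorem mul_inv_mem_quotImage_iff_of_lift (hU : CorrespondingSubgroups A B φ U U')
    (hL : CorrespondingSubgroups A B φ L L') {fU : U → U'}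
    (hfU : InducesOn A φ U (fun u => (fU u : H))) {fbar : G ⧸ L → H ⧸ L'}
    (hfbar : ∀ X ∈ A.basicSets, ∀ a b : G ⧸ L,
      b * a⁻¹ ∈ quotImage L X ↔ fbar b * (fbar a)⁻¹ ∈ quotImage L' (φ X))
    {c : G} {w : U ⧸ L.subgroupOf U → U}
    (hw : ∀ t, ((fU (w t) : H) : H ⧸ L') = fbar (sectionMap U L t * c) * (fbar c)⁻¹)
    {X : Finset G} (hX : X ∈ A.basicSets) (hXU : X ⊆ univ.filter (· ∈ U))
    (a b : U ⧸ L.subgroupOf U) :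
    b * a⁻¹ ∈ quotImage (L.subgroupOf U) (X.subtype (· ∈ U)) ↔
      (w b : U ⧸ L.subgroupOf U) * (w a : U ⧸ L.subgroupOf U)⁻¹ ∈
        quotImage (L.subgroupOf U) (X.subtype (· ∈ U)) := by
  have e₁ : sectionMap U L (b * a⁻¹) =
      sectionMap U L b * c * (sectionMap U L a * c)⁻¹ := by
    rw [map_mul, map_inv]; group
  have e₂ : fbar (sectionMap U L b * c) * (fbar (sectionMap U L a * c))⁻¹ =
      (((fU (w b) : H) * (fU (w a) : H)⁻¹ : H) : H ⧸ L') := by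
    rw [QuotientGroup.mk_mul, QuotientGroup.mk_inv, hw, hw]; group
  rw [sectionMap_mem_quotImage_iff hXU, sectionMap_mem_quotImage_iff hXU, e₁, hfbar X hX, e₂,
    ← hfU.mk_mem_quotImage_iff hU.isASet hL hX]
  simp

theorem exists_inducesOn_mk_eq [Fintype (U ⧸ L.subgroupOf U)]
    (hU : CorrespondingSubgroups A B φ U U') (hL : CorrespondingSubgroups A B φ L L')
    {fU : U → U'} (hfU_surj : Function.Surjective fU)
    (hfU : InducesOn A φ U (fun u => (fU u : H))) {fbar : G ⧸ L → H ⧸ L'}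
    (hfbar : ∀ X ∈ A.basicSets, ∀ a b : G ⧸ L,
      b * a⁻¹ ∈ quotImage L X ↔ fbar b * (fbar a)⁻¹ ∈ quotImage L' (φ X))
    {AS : SRing (U ⧸ L.subgroupOf U)}
    (hAS : AS.basicSets = (A.subSR hU.isASet).basicSets.image (quotImage (L.subgroupOf U)))
    (hautEq : sectionAut (L.subgroupOf U) ((A.subSR hU.isASet).autPerm : Set (Equiv.Perm U)) =
      (AS.autPerm : Set (Equiv.Perm (U ⧸ L.subgroupOf U))))
    (c : G) :
    ∃ ψ : U → H, InducesOn A φ U ψ ∧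
      ∀ u : U, (ψ u : H ⧸ L') = fbar ((u : G) * c) * (fbar c)⁻¹ := by
  choose w hw using exists_mk_eq_mul_inv hU hfU_surj hfbar c
  obtain ⟨σ, hσ, hσw⟩ := AS.exists_mem_autPerm (fun t => (w t : U ⧸ L.subgroupOf U)) (by
    intro Q hQ a b
    rw [hAS] at hQ
    obtain ⟨T, hT, rfl⟩ := mem_image.1 hQ
    obtain ⟨X, hX, hXU, rfl⟩ := mem_subSR_basicSets.1 hT
    exact mul_inv_mem_quotImage_iff_of_lift hU hL hfU hfbar hw hX hXU a b)
  rw [← SetLike.mem_coe, ← hautEq] at hσ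
  obtain ⟨p, hp, -, hpσ⟩ := hσ
  refine ⟨fun u => fU (p u), fun X hX hXU u v hvu => ?_, fun u => ?_⟩
  · have h := (hp (X.subtype (· ∈ U)) (mem_subSR_basicSets.2 ⟨X, hX, hXU, rfl⟩) u v).1
      (mem_subtype.2 hvu)
    exact hfU X hX hXU (p u) (p v) (mem_subtype.1 h)
  · have hpw : ((p u : G) : G ⧸ L) = (w u : G) := by
      have h := congr_arg (sectionMap U L) (hpσ u)
      simp only [hσw, sectionMap_mk] at h
      exact h.symm
    rw [(hfU.mk_eq_mk_iff hU.isASet hL (p u) (w u)).2 hpw, hw]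
    rfl

end Wreath

end SRing

open SRing

theorem stmt8_general (G : Type) [CommGroup G] [Fintype G] [DecidableEq G]
    (A : SRing G) (U L : Subgroup G) [DecidablePred (· ∈ U)] [DecidablePred (· ∈ L)]
    (hUA : A.IsASet (Finset.univ.filter (· ∈ U)))
    (hLA : A.IsASet (Finset.univ.filter (· ∈ L)))
    (hwr : ∀ X ∈ A.basicSets, ¬ X ⊆ Finset.univ.filter (· ∈ U) →
      ∀ l ∈ L, ∀ x ∈ X, l * x ∈ X)
    [Fintype (G ⧸ L)] [DecidableEq (G ⧸ L)]
    [Fintype (↥U ⧸ L.subgroupOf U)] [DecidableEq (↥U ⧸ L.subgroupOf U)]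
    (AU : SRing ↥U)
    (hAU : AU.basicSets =
      (A.basicSets.filter (fun X => X ⊆ Finset.univ.filter (· ∈ U))).image
        (Finset.subtype (· ∈ U)))
    (AGL : SRing (G ⧸ L))
    (hAGL : AGL.basicSets =
      A.basicSets.image (fun X => X.image (fun g => (QuotientGroup.mk g : G ⧸ L))))
    (AS : SRing (↥U ⧸ L.subgroupOf U))
    (hAS : AS.basicSets =
      AU.basicSets.image (fun X =>
        X.image (fun u => (QuotientGroup.mk u : ↥U ⧸ L.subgroupOf U))))
    (hsepU : AU.SeparableA) (hsepGL : AGL.SeparableA)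
    (hautEq : sectionAut (L.subgroupOf U) (AU.autPerm : Set (Equiv.Perm ↥U)) =
      (AS.autPerm : Set (Equiv.Perm (↥U ⧸ L.subgroupOf U)))) :
    A.SeparableA := by
  classical
  intro H _ _ _ B φ hφ
  obtain rfl : AU = A.subSR hUA := ext_basicSets hAU
  obtain rfl : AGL = A.quotSR hLA := ext_basicSets hAGL
  have hU := correspondingSubgroups_mapSubgroup hφ hUA
  have hL := correspondingSubgroups_mapSubgroup hφ hLA
  obtain ⟨fbar, hfbar⟩ := hsepGL _ _ _ hL.isAlgIso_quotMap
  obtain ⟨fU, hfU⟩ := hsepU _ _ _ hU.isAlgIso_restrictMap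
  have hfbar' := fun X (hX : X ∈ A.basicSets) => hfbar.mul_inv_mem_quotImage_iff hL hX
  choose ψ hψ hψL using exists_inducesOn_mk_eq hU hL hfU.1.2 hfU.inducesOn_restrictMap
    hfbar' hAS hautEq
  exact ⟨_, hφ.induces_glue (fun X hX hXU => hL.mul_mem_map hX (hwr X hX hXU)) hfbar' hψ hψL⟩

/-- Lemma on separability of S-wreath products: let `𝒜` be an S-ring over a finite abelian
group `G` which is the `S = U/L`-wreath product (i.e. `L ≤ rad(X)` for every basic set `X`
outside `U`), with `U`, `L` `𝒜`-subgroups, `L ≤ U`. If `𝒜_U` and `𝒜_{G/L}` are separable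
(w.r.t. finite abelian groups) and `Aut(𝒜_U)^S = Aut(𝒜_S)`, then `𝒜` is separable. -/
theorem stmt8 (G : Type) [CommGroup G] [Fintype G] [DecidableEq G]
    (A : SRing G) (U L : Subgroup G) [DecidablePred (· ∈ U)] [DecidablePred (· ∈ L)]
    (hLU : L ≤ U)
    (hUA : A.IsASet (Finset.univ.filter (· ∈ U)))
    (hLA : A.IsASet (Finset.univ.filter (· ∈ L)))
    (hwr : ∀ X ∈ A.basicSets, ¬ X ⊆ Finset.univ.filter (· ∈ U) →
      ∀ l ∈ L, ∀ x ∈ X, l * x ∈ X)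
    [Fintype (G ⧸ L)] [DecidableEq (G ⧸ L)]
    [Fintype (↥U ⧸ L.subgroupOf U)] [DecidableEq (↥U ⧸ L.subgroupOf U)]
    (AU : SRing ↥U)
    (hAU : AU.basicSets =
      (A.basicSets.filter (fun X => X ⊆ Finset.univ.filter (· ∈ U))).image
        (Finset.subtype (· ∈ U)))
    (AGL : SRing (G ⧸ L))
    (hAGL : AGL.basicSets =
      A.basicSets.image (fun X => X.image (fun g => (QuotientGroup.mk g : G ⧸ L))))
    (AS : SRing (↥U ⧸ L.subgroupOf U))
    (hAS : AS.basicSets =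
      AU.basicSets.image (fun X =>
        X.image (fun u => (QuotientGroup.mk u : ↥U ⧸ L.subgroupOf U))))
    (hsepU : AU.SeparableA) (hsepGL : AGL.SeparableA)
    (hautEq : sectionAut (L.subgroupOf U) (AU.autPerm : Set (Equiv.Perm ↥U)) =
      (AS.autPerm : Set (Equiv.Perm (↥U ⧸ L.subgroupOf U)))) :
    A.SeparableA :=
  stmt8_general G A U L hUA hLA hwr AU hAU AGL hAGL AS hAS hsepU hsepGL hautEq
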